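/- arXiv:2111.01647 — 2 statements merged into one kernel-verified Lean document; each statement's English description precedes it below -/
import Mathlib

section
/- If p ∈ Δ(K_A×K_B) is a product distribution, p = p_A ⊗ p_B (i.e., p^{(k_A,k_B)} = p_A^{k_A} · p_B^{k_B} for all (k_A,k_B)), then Cav(h)(p) = Cav(f_A)(p_A) + Cav(f_B)(p_B). -/
/-!
A concave majorant `g` of `h` on `Δ(K_A × K_B)`, restricted to product distributions
`q_A ⊗ q_B`, is concave in each factor separately (the outer product is bilinear). Fixing
`q_A`, the map `q_B ↦ g(q_A ⊗ q_B) - f_A(q_A)` is a concave majorant of `f_B`, so it dominates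
`Cav f_B`; then `q_A ↦ g(q_A ⊗ p_B) - Cav(f_B)(p_B)` is a concave majorant of `f_A`. Hence
`Cav(f_A)(p_A) + Cav(f_B)(p_B) ≤ g(p)` for every such `g`. Conversely
`q ↦ Cav(f_A)(q_A) + Cav(f_B)(q_B)` is itself a concave majorant of `h`.
-/

open scoped BigOperators
open Finset MeasureTheory

noncomputable section

/-- The concavification `Cav(v)(p)`: pointwise smallest concave majorant of `v` on the simplex. -/
def cav {K : Type*} [Fintype K] (v : (K → ℝ) → ℝ) (p : K → ℝ) : ℝ :=
  sInf { y : ℝ | ∃ g : (K → ℝ) → ℝ,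
    ConcaveOn ℝ (stdSimplex ℝ K) g ∧ (∀ q ∈ stdSimplex ℝ K, v q ≤ g q) ∧ y = g p }

/-- Marginal on `K_A` of a vector indexed by `K_A × K_B`. -/
def margA {KA KB : Type*} [Fintype KB] (q : KA × KB → ℝ) : KA → ℝ :=
  fun a => ∑ b, q (a, b)

/-- Marginal on `K_B` of a vector indexed by `K_A × K_B`. -/
def margB {KA KB : Type*} [Fintype KA] (q : KA × KB → ℝ) : KB → ℝ :=
  fun b => ∑ a, q (a, b)

end

open Set

section Concavification

variable {K : Type*} [Fintype K] {v g : (K → ℝ) → ℝ} {p : K → ℝ}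

theorem cav_le (hg : ConcaveOn ℝ (stdSimplex ℝ K) g) (hvg : ∀ q ∈ stdSimplex ℝ K, v q ≤ g q)
    (hp : p ∈ stdSimplex ℝ K) : cav v p ≤ g p :=
  csInf_le ⟨v p, by rintro _ ⟨g', -, hvg', rfl⟩; exact hvg' p hp⟩ ⟨g, hg, hvg, rfl⟩

theorem le_cav (hv : BddAbove (v '' stdSimplex ℝ K)) {c : ℝ}
    (hc : ∀ g, ConcaveOn ℝ (stdSimplex ℝ K) g → (∀ q ∈ stdSimplex ℝ K, v q ≤ g q) → c ≤ g p) :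
    c ≤ cav v p := by
  obtain ⟨C, hC⟩ := hv
  refine le_csInf ⟨C, fun _ => C, concaveOn_const C (convex_stdSimplex ℝ K),
    fun q hq => hC ⟨q, hq, rfl⟩, rfl⟩ ?_
  rintro _ ⟨g, hg, hvg, rfl⟩
  exact hc g hg hvg

theorem le_cav_self (hv : BddAbove (v '' stdSimplex ℝ K)) (hp : p ∈ stdSimplex ℝ K) :
    v p ≤ cav v p :=
  le_cav hv fun _ _ hvg => hvg p hp

theorem concaveOn_cav (hv : BddAbove (v '' stdSimplex ℝ K)) :
    ConcaveOn ℝ (stdSimplex ℝ K) (cav v) := by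
  refine ⟨convex_stdSimplex ℝ K, fun x hx y hy a b ha hb hab => le_cav hv fun g hg hvg => ?_⟩
  calc a • cav v x + b • cav v y
      ≤ a • g x + b • g y := by gcongr <;> exact cav_le hg hvg ‹_›
    _ ≤ g (a • x + b • y) := hg.2 hx hy ha hb hab

end Concavification

theorem ConcaveOn.comp_linearMap_stdSimplex {K K' : Type*} [Fintype K] [Fintype K']
    {g : (K' → ℝ) → ℝ} (hg : ConcaveOn ℝ (stdSimplex ℝ K') g) (L : (K → ℝ) →ₗ[ℝ] K' → ℝ)
    (hL : MapsTo L (stdSimplex ℝ K) (stdSimplex ℝ K')) :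
    ConcaveOn ℝ (stdSimplex ℝ K) (g ∘ L) :=
  (hg.comp_linearMap L).subset hL (convex_stdSimplex ℝ K)

theorem cav_add_cav_le {KA KB : Type*} [Fintype KA] [Fintype KB]
    {fA : (KA → ℝ) → ℝ} {fB : (KB → ℝ) → ℝ} {G : (KA → ℝ) → (KB → ℝ) → ℝ}
    (hGA : ∀ qB ∈ stdSimplex ℝ KB, ConcaveOn ℝ (stdSimplex ℝ KA) fun qA => G qA qB)
    (hGB : ∀ qA ∈ stdSimplex ℝ KA, ConcaveOn ℝ (stdSimplex ℝ KB) (G qA))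
    (hle : ∀ qA ∈ stdSimplex ℝ KA, ∀ qB ∈ stdSimplex ℝ KB, fA qA + fB qB ≤ G qA qB)
    {pA : KA → ℝ} {pB : KB → ℝ} (hpA : pA ∈ stdSimplex ℝ KA) (hpB : pB ∈ stdSimplex ℝ KB) :
    cav fA pA + cav fB pB ≤ G pA pB := by
  have hB : ∀ qA ∈ stdSimplex ℝ KA, fA qA + cav fB pB ≤ G qA pB := fun qA hqA => by
    have := cav_le (v := fB) ((hGB qA hqA).add_const (-fA qA))
      (fun qB hqB => by simp only [Pi.add_apply]; linarith [hle qA hqA qB hqB]) hpB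
    simp only [Pi.add_apply] at this
    linarith
  have hA := cav_le (v := fA) ((hGA pB hpB).add_const (-cav fB pB))
    (fun qA hqA => by simp only [Pi.add_apply]; linarith [hB qA hqA]) hpA
  simp only [Pi.add_apply] at hA
  linarith

section ProductSimplex

variable {KA KB : Type*}

variable (KA KB) in
def outerProd : (KA → ℝ) →ₗ[ℝ] (KB → ℝ) →ₗ[ℝ] KA × KB → ℝ :=
  LinearMap.mk₂ ℝ (fun qA qB kk => qA kk.1 * qB kk.2)
    (fun _ _ _ => by ext; simp [add_mul]) (fun _ _ _ => by ext; simp [mul_assoc])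
    (fun _ _ _ => by ext; simp [mul_add]) (fun _ _ _ => by ext; simp [mul_left_comm])

theorem margA_outerProd [Fintype KB] (qA : KA → ℝ) {qB : KB → ℝ} (hB : qB ∈ stdSimplex ℝ KB) :
    margA (outerProd KA KB qA qB) = qA := by
  ext a
  simp [margA, outerProd, ← mul_sum, hB.2]

theorem margB_outerProd [Fintype KA] {qA : KA → ℝ} (hA : qA ∈ stdSimplex ℝ KA) (qB : KB → ℝ) :
    margB (outerProd KA KB qA qB) = qB := by
  ext b
  simp [margB, outerProd, ← sum_mul, hA.2]

variable [Fintype KA] [Fintype KB]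

variable (KA KB) in
def margALinear : (KA × KB → ℝ) →ₗ[ℝ] KA → ℝ where
  toFun := margA
  map_add' x y := by ext; simp [margA, sum_add_distrib]
  map_smul' c x := by ext; simp [margA, mul_sum]

variable (KA KB) in
def margBLinear : (KA × KB → ℝ) →ₗ[ℝ] KB → ℝ where
  toFun := margB
  map_add' x y := by ext; simp [margB, sum_add_distrib]
  map_smul' c x := by ext; simp [margB, mul_sum]

theorem margA_mem_stdSimplex {q : KA × KB → ℝ} (hq : q ∈ stdSimplex ℝ (KA × KB)) :
    margA q ∈ stdSimplex ℝ KA :=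
  ⟨fun a => sum_nonneg fun b _ => hq.1 (a, b), by
    simpa only [margA, Fintype.sum_prod_type] using hq.2⟩

theorem margB_mem_stdSimplex {q : KA × KB → ℝ} (hq : q ∈ stdSimplex ℝ (KA × KB)) :
    margB q ∈ stdSimplex ℝ KB :=
  ⟨fun b => sum_nonneg fun a _ => hq.1 (a, b), by
    simpa only [margB, Fintype.sum_prod_type_right] using hq.2⟩

theorem outerProd_mem_stdSimplex {qA : KA → ℝ} {qB : KB → ℝ} (hA : qA ∈ stdSimplex ℝ KA)
    (hB : qB ∈ stdSimplex ℝ KB) : outerProd KA KB qA qB ∈ stdSimplex ℝ (KA × KB) :=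
  ⟨fun kk => mul_nonneg (hA.1 kk.1) (hB.1 kk.2), by
    simp [outerProd, Fintype.sum_prod_type, ← mul_sum, hA.2, hB.2]⟩

theorem ConcaveOn.comp_margA_add_margB {gA : (KA → ℝ) → ℝ} {gB : (KB → ℝ) → ℝ}
    (hgA : ConcaveOn ℝ (stdSimplex ℝ KA) gA) (hgB : ConcaveOn ℝ (stdSimplex ℝ KB) gB) :
    ConcaveOn ℝ (stdSimplex ℝ (KA × KB)) fun q => gA (margA q) + gB (margB q) :=
  (hgA.comp_linearMap_stdSimplex (margALinear KA KB) fun _ => margA_mem_stdSimplex).add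
    (hgB.comp_linearMap_stdSimplex (margBLinear KA KB) fun _ => margB_mem_stdSimplex)

end ProductSimplex

/-- if `p ∈ Δ(K_A×K_B)` is a product distribution `p = p_A ⊗ p_B`, then
`Cav(h)(p) = Cav(f_A)(p_A) + Cav(f_B)(p_B)`, where `h(q) = f_A(q_A) + f_B(q_B)`. -/
theorem stmt_9 {KA KB : Type*} [Fintype KA] [Fintype KB]
    (fA : (KA → ℝ) → ℝ) (fB : (KB → ℝ) → ℝ)
    (hfA : ContinuousOn fA (stdSimplex ℝ KA)) (hfB : ContinuousOn fB (stdSimplex ℝ KB))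
    (p : KA × KB → ℝ) (hp : p ∈ stdSimplex ℝ (KA × KB))
    (hprod : p = fun kk => margA p kk.1 * margB p kk.2) :
    cav (fun q : KA × KB → ℝ => fA (margA q) + fB (margB q)) p
      = cav fA (margA p) + cav fB (margB p) := by
  have hA := (isCompact_stdSimplex ℝ KA).bddAbove_image hfA
  have hB := (isCompact_stdSimplex ℝ KB).bddAbove_image hfB
  have hh : BddAbove ((fun q : KA × KB → ℝ => fA (margA q) + fB (margB q)) ''
      stdSimplex ℝ (KA × KB)) :=
    (isCompact_stdSimplex ℝ _).bddAbove_image <|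
      (hfA.comp (margALinear KA KB).continuous_of_finiteDimensional.continuousOn
          fun _ => margA_mem_stdSimplex).add
        (hfB.comp (margBLinear KA KB).continuous_of_finiteDimensional.continuousOn
          fun _ => margB_mem_stdSimplex)
  refine le_antisymm ?_ (le_cav hh fun g hg hhg => ?_)
  · exact cav_le ((concaveOn_cav hA).comp_margA_add_margB (concaveOn_cav hB))
      (fun q hq => add_le_add (le_cav_self hA (margA_mem_stdSimplex hq))
        (le_cav_self hB (margB_mem_stdSimplex hq))) hp
  · have key := cav_add_cav_le (G := fun qA qB => g (outerProd KA KB qA qB))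
      (fun qB hqB => hg.comp_linearMap_stdSimplex ((outerProd KA KB).flip qB)
        fun _ hqA => outerProd_mem_stdSimplex hqA hqB)
      (fun qA hqA => hg.comp_linearMap_stdSimplex (outerProd KA KB qA)
        fun _ => outerProd_mem_stdSimplex hqA)
      (fun qA hqA qB hqB => by
        simpa only [margA_outerProd qA hqB, margB_outerProd hqA qB] using
          hhg _ (outerProd_mem_stdSimplex hqA hqB))
      (margA_mem_stdSimplex hp) (margB_mem_stdSimplex hp)
    rwa [show outerProd KA KB (margA p) (margB p) = p from hprod.symm] at key
end

section
/- Let f : ℝⁿ → ℝ be Lipschitz, let P ⊆ ℝⁿ be a compact convex set, let x ∈ int P, and let g : P → ℝ be the convexification of f on P, i.e., the pointwise largest convex function on P that is ≤ f on P. Suppose g(x) = f(x). Then every subgradient of g at x — every φ ∈ ℝⁿ with g(y) ≥ g(x) + φ·(y − x) for all y ∈ P — belongs to the Clarke generalized gradient ∂f(x) = conv{ lim_k ∇f(x_k) : x_k → x with f differentiable at each x_k }. -/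
/-
Since `g ≤ f` and `g x = f x`, `φ` is a local subgradient of `f` at `x`:
`f y ≥ f x + φ ⬝ᵥ (y - x)` near `x`. Fix a direction `v`. If `∇f z ⬝ᵥ v < φ ⬝ᵥ v - ε` at all
differentiability points `z` near `x`, then integrating `f'` along almost every segment
`[y, y + t v]` with `y` near `x` (Rademacher and Fubini) bounds `f (y + t v) - f y` by
`(φ ⬝ᵥ v - ε) t`; letting `y → x` contradicts the subgradient inequality at `x + t v`.
Passing to limits of gradients, every direction `v` has a limiting gradient `L` with
`φ ⬝ᵥ v ≤ L ⬝ᵥ v`. The limiting gradients form a compact set, so their convex hull is closed,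
and Hahn–Banach puts `φ` in it.
-/

open scoped BigOperators
open Finset

noncomputable section

/-- Gradient of `f : ℝⁿ → ℝ` as a vector. -/
def grad {n : ℕ} (f : (Fin n → ℝ) → ℝ) (x : Fin n → ℝ) : Fin n → ℝ :=
  fun i => fderiv ℝ f x (Pi.single i 1)

/-- Clarke generalized gradient of `f` at `x`. -/
def clarkeGrad {n : ℕ} (f : (Fin n → ℝ) → ℝ) (x : Fin n → ℝ) : Set (Fin n → ℝ) :=
  convexHull ℝ { L : Fin n → ℝ | ∃ u : ℕ → Fin n → ℝ,
    (∀ m, DifferentiableAt ℝ f (u m)) ∧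
    Filter.Tendsto u Filter.atTop (nhds x) ∧
    Filter.Tendsto (fun m => grad f (u m)) Filter.atTop (nhds L) }

end

open Set Filter Topology Metric MeasureTheory
open scoped NNReal

theorem IsCompact.convexHull {E : Type*} [NormedAddCommGroup E] [NormedSpace ℝ E]
    [FiniteDimensional ℝ E] {s : Set E} (hs : IsCompact s) : IsCompact (convexHull ℝ s) := by
  rcases s.eq_empty_or_nonempty with rfl | ⟨y₀, hy₀⟩
  · simp
  set d := Module.finrank ℝ E
  -- By Carathéodory, `d + 1` points of `s` suffice.
  suffices h : _root_.convexHull ℝ s = (fun p : (Fin (d + 1) → ℝ) × (Fin (d + 1) → E) =>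
      ∑ i, p.1 i • p.2 i) '' (stdSimplex ℝ (Fin (d + 1)) ×ˢ univ.pi fun _ => s) by
    rw [h]
    exact ((isCompact_stdSimplex _ _).prod (isCompact_univ_pi fun _ => hs)).image (by fun_prop)
  refine Subset.antisymm (fun y hy => ?_) ?_
  · obtain ⟨ι, _, z, w, hzs, hz, hw0, hw1, rfl⟩ := eq_pos_convex_span_of_mem_convexHull hy
    obtain ⟨e⟩ : Nonempty (ι ↪ Fin (d + 1)) := Function.Embedding.nonempty_of_card_le <| by
      simpa using hz.card_le_finrank_succ.trans (Nat.succ_le_succ (Submodule.finrank_le _))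
    set W := Function.extend e w fun _ => 0
    set Z := Function.extend e z fun _ => y₀
    have hW (j) (hj : j ∉ range e) : W j = 0 := Function.extend_apply' _ _ _ (by simpa using hj)
    have hZ (j) (hj : j ∉ range e) : Z j = y₀ := Function.extend_apply' _ _ _ (by simpa using hj)
    have hWe (i) : W (e i) = w i := e.injective.extend_apply _ _ _
    have hZe (i) : Z (e i) = z i := e.injective.extend_apply _ _ _
    refine ⟨(W, Z), ⟨⟨fun j => ?_, ?_⟩, fun j _ => ?_⟩, ?_⟩
    · show 0 ≤ W j
      by_cases hj : j ∈ range e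
      · obtain ⟨i, rfl⟩ := hj; exact hWe i ▸ (hw0 i).le
      · exact (hW j hj).ge
    · exact (Fintype.sum_of_injective e e.injective _ _ hW fun i => (hWe i).symm).symm.trans hw1
    · show Z j ∈ s
      by_cases hj : j ∈ range e
      · obtain ⟨i, rfl⟩ := hj; exact hZe i ▸ hzs (mem_range_self i)
      · exact hZ j hj ▸ hy₀
    · refine (Fintype.sum_of_injective e e.injective _ _ (fun j hj => ?_) fun i => ?_).symm
      · simp [hW j hj]
      · simp [hWe, hZe]
  · rintro _ ⟨⟨w, z⟩, ⟨hw, hz⟩, rfl⟩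
    exact mem_convexHull_of_exists_fintype w z hw.1 hw.2 (fun i => hz i (Set.mem_univ i)) rfl

theorem mem_convexHull_of_forall_exists_le {E : Type*} [TopologicalSpace E] [AddCommGroup E]
    [IsTopologicalAddGroup E] [Module ℝ E] [ContinuousSMul ℝ E] [LocallyConvexSpace ℝ E]
    {s : Set E} (hs : IsClosed (convexHull ℝ s)) {y : E}
    (h : ∀ ℓ : StrongDual ℝ E, ∃ z ∈ s, ℓ y ≤ ℓ z) : y ∈ convexHull ℝ s := by
  by_contra hy
  obtain ⟨ℓ, u, hlt, hu⟩ := geometric_hahn_banach_closed_point (convex_convexHull ℝ s) hs hy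
  obtain ⟨z, hz, hle⟩ := h ℓ
  linarith [hlt z (subset_convexHull ℝ s hz)]

theorem ae_ae_add_smul {E : Type*} [NormedAddCommGroup E] [NormedSpace ℝ E] [MeasurableSpace E]
    [BorelSpace E] [SecondCountableTopology E] {μ : Measure E} [μ.IsAddRightInvariant]
    [SFinite μ] {p : E → Prop} (h : ∀ᵐ y ∂μ, p y) (v : E) :
    ∀ᵐ y ∂μ, ∀ᵐ s : ℝ, p (y + s • v) := by
  obtain ⟨N, hpN, hNm, hN⟩ := exists_measurable_superset_of_null (ae_iff.1 h)
  have hline : ∀ᵐ y ∂μ, ∀ᵐ s : ℝ, y + s • v ∉ N := by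
    rw [Measure.ae_ae_comm ((hNm.preimage (by fun_prop)).compl)]
    exact ae_of_all _ fun s => (measurePreserving_add_right μ (s • v)).quasiMeasurePreserving.ae
      (measure_eq_zero_iff_ae_notMem.1 hN)
  filter_upwards [hline] with y hy
  filter_upwards [hy] with s hs
  by_contra hp
  exact hs (hpN hp)

theorem LipschitzWith.sub_le_mul_of_ae_deriv_le {K : ℝ≥0} {g : ℝ → ℝ} (hg : LipschitzWith K g)
    {a b C : ℝ} (hab : a ≤ b) (h : ∀ᵐ s, s ∈ Ioo a b → deriv g s ≤ C) :
    g b - g a ≤ C * (b - a) := by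
  have hac := (hg.lipschitzOnWith (s := uIcc a b)).absolutelyContinuousOnInterval
  rw [← hac.integral_deriv_eq_sub]
  calc ∫ s in a..b, deriv g s ≤ ∫ _ in a..b, C := by
        refine intervalIntegral.integral_mono_ae_restrict hab hac.intervalIntegrable_deriv
          intervalIntegrable_const ?_
        rw [EventuallyLE, Measure.restrict_congr_set Ioo_ae_eq_Icc.symm,
          ae_restrict_iff' measurableSet_Ioo]
        exact h
    _ = C * (b - a) := by simp [mul_comm]

theorem LipschitzWith.sub_le_mul_of_fderiv_le {E : Type*} [NormedAddCommGroup E]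
    [NormedSpace ℝ E] {K : ℝ≥0} {f : E → ℝ} (hf : LipschitzWith K f) {y v : E} {t C : ℝ}
    (ht : 0 ≤ t) (hdiff : ∀ᵐ s : ℝ, DifferentiableAt ℝ f (y + s • v))
    (hC : ∀ s ∈ Ioo 0 t, DifferentiableAt ℝ f (y + s • v) → fderiv ℝ f (y + s • v) v ≤ C) :
    f (y + t • v) - f y ≤ C * t := by
  have hg : LipschitzWith _ fun s : ℝ => f (y + s • v) :=
    hf.comp <| (LipschitzWith.const y).add
      (ContinuousLinearMap.smulRight (1 : ℝ →L[ℝ] ℝ) v).lipschitz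
  suffices h : ∀ᵐ s, s ∈ Ioo 0 t → deriv (fun s : ℝ => f (y + s • v)) s ≤ C by
    simpa using hg.sub_le_mul_of_ae_deriv_le ht h
  filter_upwards [hdiff] with s hs hsI
  have hder : HasDerivAt (fun s : ℝ => f (y + s • v)) (fderiv ℝ f (y + s • v) v) s :=
    hs.hasFDerivAt.comp_hasDerivAt s (by simpa using ((hasDerivAt_id s).smul_const v).const_add y)
  exact hder.deriv ▸ hC s hsI hs

theorem LipschitzWith.exists_fderiv_ge_of_eventually_le {E : Type*} [NormedAddCommGroup E]
    [NormedSpace ℝ E] [FiniteDimensional ℝ E] {K : ℝ≥0} {f : E → ℝ} (hf : LipschitzWith K f)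
    {x : E} {ℓ : Module.Dual ℝ E} (hℓ : ∀ᶠ y in 𝓝 x, f x + ℓ (y - x) ≤ f y) (v : E)
    {ε δ : ℝ} (hε : 0 < ε) (hδ : 0 < δ) :
    ∃ z, dist z x < δ ∧ DifferentiableAt ℝ f z ∧ ℓ v - ε ≤ fderiv ℝ f z v := by
  borelize E
  by_contra! hlt
  obtain ⟨r, hr, hball⟩ := Metric.eventually_nhds_iff_ball.1 hℓ
  set ρ := min δ r
  have hρ : 0 < ρ := lt_min hδ hr
  set t := ρ / (2 * (‖v‖ + 1))
  have ht : 0 < t := by positivity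
  have htv : t * ‖v‖ < ρ / 2 := by
    have : t * (‖v‖ + 1) = ρ / 2 := by simp only [t]; field_simp
    nlinarith
  have hdist (y : E) (hy : y ∈ ball x (ρ / 2)) (s : ℝ) (hs : s ∈ Ioo 0 t) :
      dist (y + s • v) x < δ := calc
    dist (y + s • v) x ≤ ‖s • v‖ + dist y x := by simpa using dist_triangle (y + s • v) y x
    _ < ρ / 2 + ρ / 2 := by
      rw [norm_smul, Real.norm_of_nonneg hs.1.le]
      gcongr
      · exact (mul_le_mul_of_nonneg_right hs.2.le (norm_nonneg v)).trans_lt htv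
      · exact hy
    _ ≤ δ := by linarith [min_le_left δ r]
  have hae : ∀ᵐ y ∂(Measure.addHaar : Measure E),
      y ∈ ball x (ρ / 2) → f (y + t • v) - f y ≤ (ℓ v - ε) * t := by
    filter_upwards [ae_ae_add_smul hf.ae_differentiableAt v] with y hdiff hy
    exact hf.sub_le_mul_of_fderiv_le ht.le hdiff fun s hs hd => (hlt _ (hdist y hy s hs) hd).le
  -- the bound is a closed condition on `y`, so it passes from almost every `y` near `x` to `x`
  have hx : f (x + t • v) - f x ≤ (ℓ v - ε) * t := by
    have := hf.continuous
    have hclosed : IsClosed {y | f (y + t • v) - f y ≤ (ℓ v - ε) * t} :=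
      isClosed_le (by fun_prop) continuous_const
    refine hclosed.closure_subset_iff.2 ?_ ((Measure.dense_of_ae hae).open_subset_closure_inter
      isOpen_ball (mem_ball_self (half_pos hρ)))
    rintro y ⟨hyb, hy⟩
    exact hy hyb
  have hsub := hball (x + t • v) (by
    rw [mem_ball, dist_eq_norm, add_sub_cancel_left, norm_smul, Real.norm_of_nonneg ht.le]
    linarith [min_le_right δ r])
  rw [add_sub_cancel_left, map_smul, smul_eq_mul] at hsub
  nlinarith

theorem ContinuousLinearMap.apply_eq_dotProduct {ι R : Type*} [Fintype ι] [DecidableEq ι]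
    [CommSemiring R] [TopologicalSpace R] (ℓ : (ι → R) →L[R] R) (w : ι → R) :
    ℓ w = (fun i => ℓ (Pi.single i 1)) ⬝ᵥ w := by
  conv_lhs => rw [pi_eq_sum_univ' w, map_sum]
  simp [dotProduct, mul_comm]

section Clarke

variable {n : ℕ} {f : (Fin n → ℝ) → ℝ} {K : ℝ≥0}

theorem fderiv_apply_eq_grad_dotProduct (f : (Fin n → ℝ) → ℝ) (z v : Fin n → ℝ) :
    fderiv ℝ f z v = grad f z ⬝ᵥ v :=
  (fderiv ℝ f z).apply_eq_dotProduct v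

theorem LipschitzWith.norm_grad_le (hf : LipschitzWith K f) (z : Fin n → ℝ) :
    ‖grad f z‖ ≤ K := by
  refine (pi_norm_le_iff_of_nonneg K.coe_nonneg).2 fun i => ?_
  calc ‖fderiv ℝ f z (Pi.single i 1)‖
      ≤ ‖fderiv ℝ f z‖ * ‖(Pi.single i 1 : Fin n → ℝ)‖ := (fderiv ℝ f z).le_opNorm _
    _ ≤ K * 1 := by
      gcongr
      · exact norm_fderiv_le_of_lipschitz ℝ hf
      · simp [Pi.norm_single]
    _ = K := mul_one _

def limitingGradients (f : (Fin n → ℝ) → ℝ) (x : Fin n → ℝ) : Set (Fin n → ℝ) :=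
  { L | ∃ u : ℕ → Fin n → ℝ, (∀ m, DifferentiableAt ℝ f (u m)) ∧
    Tendsto u atTop (𝓝 x) ∧ Tendsto (fun m => grad f (u m)) atTop (𝓝 L) }

theorem limitingGradients_eq_setOf_mapClusterPt (f : (Fin n → ℝ) → ℝ) (x : Fin n → ℝ) :
    limitingGradients f x =
      {L | MapClusterPt L (𝓝[{z | DifferentiableAt ℝ f z}] x) (grad f)} := by
  ext L
  constructor
  · rintro ⟨u, hdiff, hu, hL⟩
    exact hL.mapClusterPt.of_comp (tendsto_nhdsWithin_iff.2 ⟨hu, .of_forall hdiff⟩)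
  · intro hL
    obtain ⟨u, hL, hu⟩ := hL.exists_seq_tendsto
    obtain ⟨hux, hdiff⟩ := tendsto_nhdsWithin_iff.1 hu
    obtain ⟨N, hN⟩ := eventually_atTop.1 hdiff
    exact ⟨fun m => u (m + N), fun m => hN _ (by omega), hux.comp (tendsto_add_atTop_nat N),
      hL.comp (tendsto_add_atTop_nat N)⟩

theorem LipschitzWith.isCompact_limitingGradients (hf : LipschitzWith K f) (x : Fin n → ℝ) :
    IsCompact (limitingGradients f x) := by
  rw [limitingGradients_eq_setOf_mapClusterPt]
  refine (isCompact_closedBall (0 : Fin n → ℝ) K).of_isClosed_subset isClosed_setOfPred_clusterPt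
    fun L hL => isClosed_closedBall.mem_of_mapClusterPt hL (.of_forall fun z => ?_)
  exact mem_closedBall_zero_iff.2 (hf.norm_grad_le z)

theorem LipschitzWith.exists_mem_limitingGradients_le (hf : LipschitzWith K f)
    {x φ : Fin n → ℝ} (hφ : ∀ᶠ y in 𝓝 x, f x + φ ⬝ᵥ (y - x) ≤ f y) (v : Fin n → ℝ) :
    ∃ L ∈ limitingGradients f x, φ ⬝ᵥ v ≤ L ⬝ᵥ v := by
  have hpos (m : ℕ) : 0 < 1 / ((m : ℝ) + 1) := Nat.one_div_pos_of_nat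
  choose z hzx hzd hzv using fun m =>
    hf.exists_fderiv_ge_of_eventually_le (ℓ := dotProductBilin ℝ ℝ φ) hφ v (hpos m) (hpos m)
  have hz : Tendsto z atTop (𝓝[{z | DifferentiableAt ℝ f z}] x) :=
    tendsto_nhdsWithin_iff.2 ⟨tendsto_iff_dist_tendsto_zero.2 (squeeze_zero (fun _ => dist_nonneg)
      (fun m => (hzx m).le) tendsto_one_div_add_atTop_nhds_zero_nat), .of_forall hzd⟩
  obtain ⟨L, -, hL⟩ := (isCompact_closedBall (0 : Fin n → ℝ) K).exists_mapClusterPt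
    (f := atTop) (u := grad f ∘ z)
    (tendsto_principal.2 (.of_forall fun m => mem_closedBall_zero_iff.2 (hf.norm_grad_le _)))
  refine ⟨L, ?_, le_of_forall_pos_le_add fun ε hε => ?_⟩
  · rw [limitingGradients_eq_setOf_mapClusterPt]
    exact hL.of_comp hz
  have hnear : ∀ᶠ m in atTop, (grad f ∘ z) m ∈ {L' | φ ⬝ᵥ v ≤ L' ⬝ᵥ v + ε} := by
    filter_upwards [tendsto_one_div_add_atTop_nhds_zero_nat.eventually (gt_mem_nhds hε)]
      with m hm
    have := hzv m
    simp only [dotProductBilin_apply_apply, fderiv_apply_eq_grad_dotProduct] at this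
    simp only [Function.comp_apply]
    linarith
  exact (isClosed_le continuous_const (by fun_prop)).mem_of_mapClusterPt hL hnear

theorem LipschitzWith.mem_clarkeGrad_of_eventually_le (hf : LipschitzWith K f)
    {x φ : Fin n → ℝ} (hφ : ∀ᶠ y in 𝓝 x, f x + φ ⬝ᵥ (y - x) ≤ f y) : φ ∈ clarkeGrad f x := by
  refine mem_convexHull_of_forall_exists_le (hf.isCompact_limitingGradients x).convexHull.isClosed
    fun ℓ => ?_
  obtain ⟨L, hL, hle⟩ := hf.exists_mem_limitingGradients_le hφ fun i => ℓ (Pi.single i 1)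
  refine ⟨L, hL, ?_⟩
  rwa [ℓ.apply_eq_dotProduct φ, ℓ.apply_eq_dotProduct L, dotProduct_comm, dotProduct_comm _ L]

end Clarke

theorem stmt_16_general {n : ℕ} (f : (Fin n → ℝ) → ℝ) (c : NNReal) (hf : LipschitzWith c f)
    (P : Set (Fin n → ℝ))
    (x : Fin n → ℝ) (hx : x ∈ interior P)
    (g : (Fin n → ℝ) → ℝ)
    (hgle : ∀ y ∈ P, g y ≤ f y)
    (hgx : g x = f x)
    (φ : Fin n → ℝ) (hφ : ∀ y ∈ P, g x + ∑ i, φ i * (y i - x i) ≤ g y) :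
    φ ∈ clarkeGrad f x := by
  refine hf.mem_clarkeGrad_of_eventually_le ?_
  filter_upwards [mem_interior_iff_mem_nhds.1 hx] with y hy
  show f x + ∑ i, φ i * (y i - x i) ≤ f y
  linarith [hφ y hy, hgle y hy]

/-- let `f : ℝⁿ → ℝ` be Lipschitz, `P` compact convex, `x ∈ int P`, and
`g` the convexification of `f` on `P` (largest convex function on `P` dominated by `f`),
with `g(x) = f(x)`. Then every subgradient `φ` of `g` at `x` belongs to the Clarke
generalized gradient `∂f(x)`. -/
theorem stmt_16 {n : ℕ} (f : (Fin n → ℝ) → ℝ) (c : NNReal) (hf : LipschitzWith c f)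
    (P : Set (Fin n → ℝ)) (hPcomp : IsCompact P) (hPconv : Convex ℝ P)
    (x : Fin n → ℝ) (hx : x ∈ interior P)
    (g : (Fin n → ℝ) → ℝ)
    (hgconv : ConvexOn ℝ P g) (hgle : ∀ y ∈ P, g y ≤ f y)
    (hgmax : ∀ g' : (Fin n → ℝ) → ℝ, ConvexOn ℝ P g' → (∀ y ∈ P, g' y ≤ f y) →
      ∀ y ∈ P, g' y ≤ g y)
    (hgx : g x = f x)
    (φ : Fin n → ℝ) (hφ : ∀ y ∈ P, g x + ∑ i, φ i * (y i - x i) ≤ g y) :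
    φ ∈ clarkeGrad f x :=
  stmt_16_general f c hf P x hx g hgle hgx φ hφ
end
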